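/- Under the same setting as the median-of-means concentration (i.i.d. sample, regular partition into V blocks with ln(1/δ) ≤ V ≤ n/2), if f satisfies Var_P(f²) < ∞ and the condition L_1 · (√(Var_P f²)/Pf²) · √(V/n) ≤ 1/2 whenever Pf² ≠ 0, then P( Var_P(f) ≤ 2 P̄_B f² ) ≥ 1 − δ. -/

import Mathlib

open MeasureTheory ProbabilityTheory Finset Function
open scoped ENNReal

/-!
Since `Var f ≤ P f²`, it suffices that the median of the block means of `f²` is at least `P f² / 2`
with probability `≥ 1 - δ`. By Chebyshev and the ratio condition, a block mean of `≥ n / (2V)`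
i.i.d. terms falls below `P f² / 2` with probability at most `1 / (12e)`. The block means are
independent, and a median below `P f² / 2` forces at least `k = ⌈V/2⌉` of them below it, which
happens with probability at most `C(V, k) (12e)⁻ᵏ ≤ 4ᵏ (12e)⁻ᵏ ≤ e⁻ⱽ ≤ δ`.
-/

theorem choose_mul_pow_le_exp_neg {V k : ℕ} (hk : V ≤ 2 * k) :
    (V.choose k : ℝ) * (12 * Real.exp 1)⁻¹ ^ k ≤ Real.exp (-V) := by
  have hchoose : (V.choose k : ℝ) ≤ 4 ^ k := by
    calc (V.choose k : ℝ) ≤ 2 ^ V := by exact_mod_cast Nat.choose_le_two_pow V k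
      _ ≤ 2 ^ (2 * k) := pow_le_pow_right₀ one_le_two hk
      _ = 4 ^ k := by rw [pow_mul]; norm_num
  have hbase : 4 * (12 * Real.exp 1)⁻¹ ≤ Real.exp (-2) := by
    rw [Real.exp_neg, show (2 : ℝ) = 1 + 1 by norm_num, Real.exp_add]
    have := Real.exp_one_lt_d9
    have := Real.exp_pos 1
    field_simp
    nlinarith
  calc (V.choose k : ℝ) * (12 * Real.exp 1)⁻¹ ^ k ≤ 4 ^ k * (12 * Real.exp 1)⁻¹ ^ k := by
        gcongr
    _ = (4 * (12 * Real.exp 1)⁻¹) ^ k := (mul_pow _ _ _).symm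
    _ ≤ Real.exp (-2) ^ k := by gcongr
    _ = Real.exp (-(2 * k : ℕ)) := by rw [← Real.exp_nat_mul]; push_cast; ring_nf
    _ ≤ Real.exp (-V) := Real.exp_le_exp.2 (by exact_mod_cast neg_le_neg (Nat.cast_le.2 hk))

theorem exp_neg_le_of_log_one_div_le {δ x : ℝ} (hδ : 0 < δ) (h : Real.log (1 / δ) ≤ x) :
    Real.exp (-x) ≤ δ := by
  rw [one_div, Real.log_inv] at h
  calc Real.exp (-x) ≤ Real.exp (Real.log δ) := Real.exp_le_exp.2 (by linarith)
    _ = δ := Real.exp_log hδ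

theorem div_two_le_of_abs_sub_div_le_one {c n V : ℝ} (hV : 0 < V) (hVn : V ≤ n / 2)
    (h : |c - n / V| ≤ 1) : n / V / 2 ≤ c := by
  have : 2 ≤ n / V := (le_div_iff₀ hV).2 (by linarith)
  linarith [(abs_le.1 h).1]

theorem exists_le_of_le_two_mul_card_filter_le {ι : Type*} [Fintype ι] {Z : ι → ℝ} {V t : ℝ}
    (hV : 0 < V) [DecidablePred fun i => Z i ≤ t] (h : V ≤ 2 * #{i | Z i ≤ t}) : ∃ i, Z i ≤ t := by
  have hpos : 0 < #{i | Z i ≤ t} := by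
    exact_mod_cast (by linarith : (0 : ℝ) < #{i | Z i ≤ t})
  obtain ⟨i, hi⟩ := card_pos.1 hpos
  exact ⟨i, (mem_filter.1 hi).2⟩

theorem le_two_mul_card_filter_lt_of_lt {ι : Type*} [Fintype ι] {Z : ι → ℝ} {V t s : ℝ}
    [DecidablePred fun i => Z i ≤ t] [DecidablePred fun i => Z i < s]
    (h : V ≤ 2 * #{i | Z i ≤ t}) (hts : t < s) : V ≤ 2 * #{i | Z i < s} :=
  h.trans (by gcongr)

/-- `4σ² / (c m²)` is Chebyshev's bound for a mean of `c` i.i.d. terms to fall below half its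
mean `m`. -/
theorem four_mul_div_le_of_ratio_le {σ2 m c n V : ℝ} (hσ2 : 0 ≤ σ2) (hm : 0 < m) (hn : 0 < n)
    (hV : 0 < V) (hc : n / V / 2 ≤ c)
    (h : 2 * Real.sqrt (6 * Real.exp 1) * (Real.sqrt σ2 / m) * Real.sqrt (V / n) ≤ 1 / 2) :
    4 * σ2 / (c * m ^ 2) ≤ (12 * Real.exp 1)⁻¹ := by
  have hratio : 24 * Real.exp 1 * (σ2 * V / (n * m ^ 2)) ≤ 1 / 4 := by
    have hsq := pow_le_pow_left₀ (by positivity) h 2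
    rw [mul_pow, mul_pow, mul_pow, div_pow, Real.sq_sqrt (by positivity), Real.sq_sqrt hσ2,
      Real.sq_sqrt (by positivity)] at hsq
    calc 24 * Real.exp 1 * (σ2 * V / (n * m ^ 2))
        = 2 ^ 2 * (6 * Real.exp 1) * (σ2 / m ^ 2) * (V / n) := by ring
      _ ≤ (1 / 2) ^ 2 := hsq
      _ = 1 / 4 := by norm_num
  calc 4 * σ2 / (c * m ^ 2) ≤ 4 * σ2 / (n / V / 2 * m ^ 2) := by gcongr
    _ = 8 * (σ2 * V / (n * m ^ 2)) := by field_simp; ring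
    _ ≤ (12 * Real.exp 1)⁻¹ := by
      rw [← one_div, le_div_iff₀ (by positivity)]
      linarith

namespace ProbabilityTheory

variable {Ω E ι κ : Type*}

noncomputable def blockMean (g : E → ℝ) (X : ι → Ω → E) (T : Finset ι) (ω : Ω) : ℝ :=
  (#T : ℝ)⁻¹ * ∑ i ∈ T, g (X i ω)

theorem blockMean_nonneg {g : E → ℝ} {X : ι → Ω → E} (hg : ∀ x, 0 ≤ g x) (T : Finset ι)
    (ω : Ω) : 0 ≤ blockMean g X T ω :=
  mul_nonneg (by positivity) (sum_nonneg fun i _ => hg _)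

variable [MeasurableSpace Ω] [MeasurableSpace E] {μ : Measure Ω}

theorem iIndepFun.iIndepFun_blocks {X : ι → Ω → E} (hX : iIndepFun X μ)
    (hXmeas : ∀ i, Measurable (X i)) {B : κ → Finset ι} (hB : Pairwise (Disjoint on B)) :
    iIndepFun (fun K ω (i : B K) => X i ω) μ := by
  classical
  have := hX.isProbabilityMeasure
  rw [iIndepFun_iff_measure_inter_preimage_eq_mul]
  intro S
  induction S using Finset.induction_on with
  | empty => simp
  | @insert a S ha ih =>
    intro s hs
    have hdisj : Disjoint (B a) (S.biUnion B) :=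
      (disjoint_biUnion_right _ _ _).2 fun K hK => hB (ne_of_mem_of_not_mem hK ha).symm
    let R : (S.biUnion B → E) → (∀ K : S, B K → E) :=
      fun v K i => v ⟨i, mem_biUnion.2 ⟨K, K.2, i.2⟩⟩
    have hR : Measurable R := by fun_prop
    have hrest : ⋂ K ∈ S, (fun ω (i : B K) => X i ω) ⁻¹' s K =
        (fun ω (i : S.biUnion B) => X i ω) ⁻¹' (R ⁻¹' Set.univ.pi fun K => s K) := by
      ext ω
      simp [R]
    rw [set_biInter_insert, prod_insert ha, ← ih fun K hK => hs K (mem_insert_of_mem hK), hrest]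
    exact (hX.indepFun_finset _ _ hdisj hXmeas).measure_inter_preimage_eq_mul _ _
      (hs a (mem_insert_self a S))
      (hR (MeasurableSet.univ_pi fun K => hs K (mem_insert_of_mem K.2)))

theorem iIndepFun.iIndepSet_preimage {β : ι → Type*} [∀ i, MeasurableSpace (β i)]
    {Y : ∀ i, Ω → β i} (hY : iIndepFun Y μ) (hYmeas : ∀ i, Measurable (Y i))
    {s : ∀ i, Set (β i)} (hs : ∀ i, MeasurableSet (s i)) :
    iIndepSet (fun i => Y i ⁻¹' s i) μ :=
  (iIndepSet_iff_meas_biInter fun i => hYmeas i (hs i)).2 fun _ =>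
    hY.meas_biInter fun i _ => ⟨s i, hs i, rfl⟩

open Classical in
theorem iIndepSet.measure_le_card_filter_mem_le [Fintype ι] {A : ι → Set Ω} (hA : iIndepSet A μ)
    {p : ℝ≥0∞} (hp : ∀ i, μ (A i) ≤ p) (k : ℕ) :
    μ {ω | k ≤ #{i | ω ∈ A i}} ≤ (Fintype.card ι).choose k * p ^ k := by
  have hcover : {ω | k ≤ #{i | ω ∈ A i}} ⊆ ⋃ S ∈ powersetCard k univ, ⋂ i ∈ S, A i := by
    intro ω hω
    obtain ⟨S, hS, hcard⟩ := exists_subset_card_eq hω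
    exact Set.mem_biUnion (mem_powersetCard.2 ⟨subset_univ S, hcard⟩)
      (Set.mem_biInter fun i hi => (mem_filter.1 (hS hi)).2)
  have hinter : ∀ S ∈ powersetCard k (univ : Finset ι), μ (⋂ i ∈ S, A i) ≤ p ^ k := by
    intro S hS
    rw [hA.meas_biInter, ← (mem_powersetCard.1 hS).2, ← prod_const]
    exact prod_le_prod' fun i _ => hp i
  calc _ ≤ μ (⋃ S ∈ powersetCard k univ, ⋂ i ∈ S, A i) := measure_mono hcover
    _ ≤ ∑ S ∈ powersetCard k univ, μ (⋂ i ∈ S, A i) := measure_biUnion_finset_le _ _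
    _ ≤ ∑ S ∈ powersetCard k (univ : Finset ι), p ^ k := sum_le_sum hinter
    _ = _ := by rw [sum_const, card_powersetCard, card_univ, nsmul_eq_mul]

open Classical in
theorem iIndepSet.measure_half_le_exp_neg [Fintype ι] {A : ι → Set Ω} (hA : iIndepSet A μ)
    (hp : ∀ i, μ (A i) ≤ ENNReal.ofReal (12 * Real.exp 1)⁻¹) :
    μ {ω | Fintype.card ι ≤ 2 * #{i | ω ∈ A i}}
      ≤ ENNReal.ofReal (Real.exp (-Fintype.card ι)) := by
  set k := Fintype.card ι - Fintype.card ι / 2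
  calc _ ≤ μ {ω | k ≤ #{i | ω ∈ A i}} := measure_mono fun ω hω => by
        simp only [Set.mem_ofPred_eq] at hω ⊢; omega
    _ ≤ (Fintype.card ι).choose k * ENNReal.ofReal (12 * Real.exp 1)⁻¹ ^ k :=
      hA.measure_le_card_filter_mem_le hp k
    _ = ENNReal.ofReal ((Fintype.card ι).choose k * (12 * Real.exp 1)⁻¹ ^ k) := by
      rw [ENNReal.ofReal_mul (by positivity), ENNReal.ofReal_natCast,
        ENNReal.ofReal_pow (by positivity)]
    _ ≤ _ := ENNReal.ofReal_le_ofReal (choose_mul_pow_le_exp_neg (by omega))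

theorem one_sub_le_measure_of_measure_compl_le [IsProbabilityMeasure μ] {s : Set Ω} {ε : ℝ≥0∞}
    (h : μ sᶜ ≤ ε) : 1 - ε ≤ μ s := by
  refine tsub_le_iff_right.2 (le_add_of_le_add_left ?_ h)
  rw [← measure_univ (μ := μ), ← Set.union_compl_self s]
  exact measure_union_le _ _

theorem measure_lt_le_exp_neg_of_le_two_mul_card [Fintype ι] {Z : ι → Ω → ℝ}
    (hZ : iIndepFun Z μ) (hZmeas : ∀ i, Measurable (Z i)) {med : Ω → ℝ}
    (hmed : ∀ ω, (Fintype.card ι : ℝ) ≤ 2 * #{i | Z i ω ≤ med ω}) {t : ℝ}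
    (ht : ∀ i, μ {ω | Z i ω < t} ≤ ENNReal.ofReal (12 * Real.exp 1)⁻¹) :
    μ {ω | med ω < t} ≤ ENNReal.ofReal (Real.exp (-Fintype.card ι)) := by
  classical
  refine (measure_mono fun ω (hω : med ω < t) => ?_).trans
    ((hZ.iIndepSet_preimage hZmeas fun _ => measurableSet_Iio).measure_half_le_exp_neg ht)
  exact_mod_cast le_two_mul_card_filter_lt_of_lt (hmed ω) hω

section BlockMean

variable {P : Measure E} {X : ι → Ω → E} {g : E → ℝ}

theorem measurable_blockMean (hXmeas : ∀ i, Measurable (X i)) (hgmeas : Measurable g)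
    (T : Finset ι) : Measurable (blockMean g X T) := by
  unfold blockMean
  fun_prop

theorem memLp_blockMean (hXmeas : ∀ i, Measurable (X i)) (hid : ∀ i, μ.map (X i) = P)
    (hg : MemLp g 2 P) (T : Finset ι) : MemLp (blockMean g X T) 2 μ := by
  have hterm (i : ι) : MemLp (fun ω => g (X i ω)) 2 μ :=
    (hid i ▸ hg).comp_of_map (hXmeas i).aemeasurable
  exact (memLp_finsetSum T fun i _ => hterm i).const_mul _

theorem integral_blockMean (hXmeas : ∀ i, Measurable (X i)) (hid : ∀ i, μ.map (X i) = P)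
    (hg : Integrable g P) {T : Finset ι} (hT : T.Nonempty) :
    ∫ ω, blockMean g X T ω ∂μ = ∫ x, g x ∂P := by
  have hterm (i : ι) : ∫ ω, g (X i ω) ∂μ = ∫ x, g x ∂P := by
    rw [← hid i, integral_map (hXmeas i).aemeasurable (hid i ▸ hg.aestronglyMeasurable)]
  have hint (i : ι) : Integrable (fun ω => g (X i ω)) μ :=
    (hid i ▸ hg).comp_measurable (hXmeas i)
  unfold blockMean
  rw [integral_const_mul, integral_finsetSum T fun i _ => hint i,
    sum_congr rfl fun i _ => hterm i, sum_const, nsmul_eq_mul, inv_mul_cancel_left₀]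
  exact_mod_cast hT.card_pos.ne'

theorem variance_blockMean (hX : iIndepFun X μ) (hXmeas : ∀ i, Measurable (X i))
    (hid : ∀ i, μ.map (X i) = P) (hg : MemLp g 2 P) (hgmeas : Measurable g) (T : Finset ι) :
    Var[blockMean g X T; μ] = Var[g; P] / #T := by
  have hterm (i : ι) : Var[fun ω => g (X i ω); μ] = Var[g; P] :=
    (MeasurePreserving.mk (hXmeas i) (hid i)).variance_fun_comp hgmeas.aemeasurable
  have hsum : Var[fun ω => ∑ i ∈ T, g (X i ω); μ] = #T * Var[g; P] := by
    have := IndepFun.variance_sum (μ := μ) (X := fun i ω => g (X i ω)) (s := T)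
      (fun i _ => (hid i ▸ hg).comp_of_map (hXmeas i).aemeasurable)
      fun i _ j _ hij => (hX.indepFun hij).comp hgmeas hgmeas
    rw [Finset.sum_fn] at this
    rw [this, sum_congr rfl fun i _ => hterm i, sum_const, nsmul_eq_mul]
  unfold blockMean
  rw [variance_const_mul, hsum]
  field_simp

theorem measure_blockMean_lt_half_le (hX : iIndepFun X μ)
    (hXmeas : ∀ i, Measurable (X i)) (hid : ∀ i, μ.map (X i) = P) (hg : MemLp g 2 P)
    (hgmeas : Measurable g) {T : Finset ι} (hT : T.Nonempty) (hpos : 0 < ∫ x, g x ∂P) :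
    μ {ω | blockMean g X T ω < (∫ x, g x ∂P) / 2}
      ≤ ENNReal.ofReal (4 * Var[g; P] / (#T * (∫ x, g x ∂P) ^ 2)) := by
  have := hX.isProbabilityMeasure
  have : IsFiniteMeasure P := hid hT.choose ▸ inferInstance
  set m := ∫ x, g x ∂P
  have hmean : μ[blockMean g X T] = m :=
    integral_blockMean hXmeas hid (hg.integrable one_le_two) hT
  have hsub : {ω | blockMean g X T ω < m / 2} ⊆
      {ω | m / 2 ≤ |blockMean g X T ω - μ[blockMean g X T]|} := by
    intro ω hω
    simp only [Set.mem_ofPred_eq, hmean] at hω ⊢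
    rw [abs_sub_comm, abs_of_nonneg (by linarith)]
    linarith
  calc _ ≤ _ := measure_mono hsub
    _ ≤ ENNReal.ofReal (Var[blockMean g X T; μ] / (m / 2) ^ 2) :=
      meas_ge_le_variance_div_sq (memLp_blockMean hXmeas hid hg T) (by linarith)
    _ = _ := by
      rw [variance_blockMean hX hXmeas hid hg hgmeas T]
      congr 1
      field_simp
      ring

theorem measure_blockMean_lt_half_le_of_ratio_le (hX : iIndepFun X μ)
    (hXmeas : ∀ i, Measurable (X i)) (hid : ∀ i, μ.map (X i) = P) (hg : MemLp g 2 P)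
    (hgmeas : Measurable g) {n V : ℝ} (hV : 0 < V) (hVn : V ≤ n / 2) {T : Finset ι}
    (hT : |#T - n / V| ≤ 1) (hpos : 0 < ∫ x, g x ∂P)
    (hratio : 2 * Real.sqrt (6 * Real.exp 1) * (Real.sqrt Var[g; P] / ∫ x, g x ∂P) *
      Real.sqrt (V / n) ≤ 1 / 2) :
    μ {ω | blockMean g X T ω < (∫ x, g x ∂P) / 2} ≤ ENNReal.ofReal (12 * Real.exp 1)⁻¹ := by
  have hn : 0 < n := by linarith
  have hcard : n / V / 2 ≤ #T := div_two_le_of_abs_sub_div_le_one hV hVn hT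
  have hne : T.Nonempty :=
    card_pos.1 (by exact_mod_cast (by positivity : (0 : ℝ) < n / V / 2).trans_le hcard)
  exact (measure_blockMean_lt_half_le hX hXmeas hid hg hgmeas hne hpos).trans
    (ENNReal.ofReal_le_ofReal
      (four_mul_div_le_of_ratio_le (variance_nonneg _ _) hpos hn hV hcard hratio))

theorem iIndepFun.iIndepFun_blockMean (hX : iIndepFun X μ) (hXmeas : ∀ i, Measurable (X i))
    (hgmeas : Measurable g) {B : κ → Finset ι} (hB : Pairwise (Disjoint on B)) :
    iIndepFun (fun K => blockMean g X (B K)) μ := by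
  have hmean (K : κ) : blockMean g X (B K) =
      (fun v : B K → E => (#(B K) : ℝ)⁻¹ * ∑ i, g (v i)) ∘ fun ω i => X i ω := by
    ext ω
    rw [blockMean, Function.comp_apply, sum_coe_sort (B K) fun i => g (X i ω)]
  simp_rw [hmean]
  exact (hX.iIndepFun_blocks hXmeas hB).comp _ fun K => by fun_prop

end BlockMean

end ProbabilityTheory

theorem robust_variance_upper_bound_general
    {Ω E : Type*} [MeasurableSpace Ω] [MeasurableSpace E]
    (μ : Measure Ω) [IsProbabilityMeasure μ]
    (n V : ℕ) (hn : 0 < n) (hV : 0 < V)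
    (X : Fin n → Ω → E) (hXmeas : ∀ i, Measurable (X i))
    (hindep : iIndepFun X μ)
    (P : Measure E) (hid : ∀ i, Measure.map (X i) μ = P)
    (f : E → ℝ) (hf : Measurable f) (hf2 : MemLp (fun x => (f x) ^ 2) 2 P)
    (δ : ℝ) (hδ : δ ∈ Set.Ioo (0 : ℝ) 1)
    (hVlow : Real.log (1 / δ) ≤ (V : ℝ)) (hVup : (V : ℝ) ≤ (n : ℝ) / 2)
    (B : Fin V → Finset (Fin n))
    (hdisj : Pairwise (fun K K' => Disjoint (B K) (B K')))
    (hreg : ∀ K, |((B K).card : ℝ) - (n : ℝ) / V| ≤ 1)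
    (hCf : ∫ x, (f x) ^ 2 ∂P ≠ 0 →
      (2 * Real.sqrt (6 * Real.exp 1)) *
          (Real.sqrt (variance (fun x => (f x) ^ 2) P) / ∫ x, (f x) ^ 2 ∂P) *
          Real.sqrt ((V : ℝ) / n) ≤ 1 / 2)
    (med2 : Ω → ℝ)
    (hmed2 : ∀ ω,
      (V : ℝ) ≤ 2 * (Finset.univ.filter (fun K =>
          ((B K).card : ℝ)⁻¹ * ∑ i ∈ B K, (f (X i ω)) ^ 2 ≤ med2 ω)).card ∧
      (V : ℝ) ≤ 2 * (Finset.univ.filter (fun K =>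
          med2 ω ≤ ((B K).card : ℝ)⁻¹ * ∑ i ∈ B K, (f (X i ω)) ^ 2)).card) :
    1 - ENNReal.ofReal δ ≤ μ {ω | variance f P ≤ 2 * med2 ω} := by
  have : IsProbabilityMeasure P :=
    hid ⟨0, hn⟩ ▸ Measure.isProbabilityMeasure_map (hXmeas _).aemeasurable
  set g : E → ℝ := fun x => f x ^ 2
  set m := ∫ x, g x ∂P
  have hcount (ω : Ω) : (V : ℝ) ≤ 2 * #{K | blockMean g X (B K) ω ≤ med2 ω} := (hmed2 ω).1
  have hvar : variance f P ≤ m := variance_le_expectation_sq hf.aestronglyMeasurable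
  rcases (integral_nonneg fun x => sq_nonneg (f x) : 0 ≤ m).eq_or_lt with hm | hm
  · have hgood : {ω | variance f P ≤ 2 * med2 ω} = Set.univ := Set.eq_univ_of_forall fun ω => by
      obtain ⟨K, hK⟩ := exists_le_of_le_two_mul_card_filter_le (by positivity) (hcount ω)
      have := (blockMean_nonneg (fun x => sq_nonneg (f x)) _ ω).trans hK
      show variance f P ≤ 2 * med2 ω
      linarith
    simp [hgood]
  have hgmeas : Measurable g := hf.pow_const 2
  have hmom := measure_lt_le_exp_neg_of_le_two_mul_card
    (hindep.iIndepFun_blockMean hXmeas hgmeas hdisj)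
    (fun K => measurable_blockMean hXmeas hgmeas (B K))
    (fun ω => by rw [Fintype.card_fin]; exact hcount ω) (t := m / 2) fun K =>
      measure_blockMean_lt_half_le_of_ratio_le hindep hXmeas hid hf2 hgmeas
        (by exact_mod_cast hV) hVup (hreg K) hm (hCf hm.ne')
  refine one_sub_le_measure_of_measure_compl_le ((measure_mono fun ω hω => ?_).trans
    (hmom.trans (ENNReal.ofReal_le_ofReal ?_)))
  · simp only [Set.mem_compl_iff, Set.mem_ofPred_eq, not_le] at hω ⊢
    linarith
  · simpa using exp_neg_le_of_log_one_div_le hδ.1 hVlow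

/-- Robust variance upper bound (Corollary 1): under the median-of-means setting,
if `Var(f²) < ∞` and the ratio condition
`L₁ √(Var f²)/(Pf²) √(V/n) ≤ 1/2` (whenever `Pf² ≠ 0`) holds, then with
probability at least `1 - δ` one has `Var f ≤ 2 P̄_B f²`, where `P̄_B f²` is the
median of the block empirical means of `f²`. -/
theorem robust_variance_upper_bound
    {Ω E : Type*} [MeasurableSpace Ω] [MeasurableSpace E]
    (μ : Measure Ω) [IsProbabilityMeasure μ]
    (n V : ℕ) (hn : 0 < n) (hV : 0 < V)
    (X : Fin n → Ω → E) (hXmeas : ∀ i, Measurable (X i))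
    (hindep : iIndepFun X μ)
    (P : Measure E) (hid : ∀ i, Measure.map (X i) μ = P)
    (f : E → ℝ) (hf : Measurable f) (hf2 : MemLp (fun x => (f x) ^ 2) 2 P)
    (δ : ℝ) (hδ : δ ∈ Set.Ioo (0 : ℝ) 1)
    (hVlow : Real.log (1 / δ) ≤ (V : ℝ)) (hVup : (V : ℝ) ≤ (n : ℝ) / 2)
    (B : Fin V → Finset (Fin n))
    (hdisj : Pairwise (fun K K' => Disjoint (B K) (B K')))
    (hcover : Finset.univ.biUnion B = Finset.univ)
    (hreg : ∀ K, |((B K).card : ℝ) - (n : ℝ) / V| ≤ 1)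
    (hCf : ∫ x, (f x) ^ 2 ∂P ≠ 0 →
      (2 * Real.sqrt (6 * Real.exp 1)) *
          (Real.sqrt (variance (fun x => (f x) ^ 2) P) / ∫ x, (f x) ^ 2 ∂P) *
          Real.sqrt ((V : ℝ) / n) ≤ 1 / 2)
    (med2 : Ω → ℝ)
    (hmed2 : ∀ ω,
      (V : ℝ) ≤ 2 * (Finset.univ.filter (fun K =>
          ((B K).card : ℝ)⁻¹ * ∑ i ∈ B K, (f (X i ω)) ^ 2 ≤ med2 ω)).card ∧
      (V : ℝ) ≤ 2 * (Finset.univ.filter (fun K =>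
          med2 ω ≤ ((B K).card : ℝ)⁻¹ * ∑ i ∈ B K, (f (X i ω)) ^ 2)).card) :
    1 - ENNReal.ofReal δ ≤ μ {ω | variance f P ≤ 2 * med2 ω} :=
  robust_variance_upper_bound_general μ n V hn hV X hXmeas hindep P hid f hf hf2 δ hδ hVlow hVup B
    hdisj hreg hCf med2 hmed2
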